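/- arXiv:2508.06355 — 3 statements merged into one kernel-verified Lean document; each statement's English description precedes it below -/
import Mathlib

section
/- Let d ≥ 1 and let C be a real d×d matrix. For every radius r ≥ 0, the integral of x ↦ 1 − (1/6)⟨x, C x⟩ over the closed Euclidean ball of radius r centered at the origin in ℝ^d equals ω_d · r^d · (1 − (trace C) · r² / (6(d + 2))), where ω_d is the Lebesgue volume of the unit ball in ℝ^d. -/
/-!
The ball is invariant under the coordinate reflections and permutations of `ℝ^d`, so its
second-moment matrix `∫ x_i x_j` vanishes off the diagonal and has equal diagonal entries; these
add up to `∫ ‖x‖²`, which polar coordinates evaluate to `d ω_d r^(d+2) / (d+2)`. Integrating the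
quadratic form therefore gives `trace C · ω_d r^(d+2) / (d+2)`, and the constant `1` gives
`ω_d r^d`.
-/

open MeasureTheory Metric Set Module

section Radial

variable {E : Type*} [NormedAddCommGroup E] [NormedSpace ℝ E] [FiniteDimensional ℝ E]
  [MeasurableSpace E] [BorelSpace E] [Nontrivial E]

theorem integral_closedBall_norm_pow (μ : Measure E) [μ.IsAddHaarMeasure] (k : ℕ) {r : ℝ}
    (hr : 0 ≤ r) :
    ∫ x in closedBall (0 : E) r, ‖x‖ ^ k ∂μ =
      finrank ℝ E * μ.real (closedBall 0 1) * (r ^ (finrank ℝ E + k) / (finrank ℝ E + k)) := by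
  set n := finrank ℝ E
  have hn : n - 1 + k + 1 = n + k := by have : 0 < n := finrank_pos; omega
  have hball : closedBall (0 : E) r = norm ⁻¹' Iic r := by ext; simp
  have hradial : ∫ y in Ioi (0 : ℝ), y ^ (n - 1) • (Iic r).indicator (· ^ k) y =
      r ^ (n + k) / (n + k) := by
    rw [← indicator_smul (Iic r) (fun y : ℝ => y ^ (n - 1)) (· ^ k),
      setIntegral_indicator measurableSet_Iic, Ioi_inter_Iic,
      ← intervalIntegral.integral_of_le hr]
    simp_rw [smul_eq_mul, ← pow_add]
    rw [integral_pow, ← Nat.cast_add_one, hn, zero_pow (by omega), sub_zero, Nat.cast_add]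
  rw [← integral_indicator measurableSet_closedBall, hball]
  simp_rw [← Function.comp_apply (f := fun t : ℝ => t ^ k) (g := norm), indicator_comp_right]
  rw [integral_fun_norm_addHaar μ, hradial, measureReal_def, measureReal_def,
    Measure.addHaar_closedBall_eq_addHaar_ball, nsmul_eq_mul, smul_eq_mul, mul_assoc]

end Radial

theorem LinearIsometryEquiv.setIntegral_closedBall_comp {E F : Type*} [NormedAddCommGroup E]
    [InnerProductSpace ℝ E] [FiniteDimensional ℝ E] [MeasurableSpace E] [BorelSpace E]
    [NormedAddCommGroup F] [NormedSpace ℝ F] (e : E ≃ₗᵢ[ℝ] E) (f : E → F) (r : ℝ) :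
    ∫ x in closedBall 0 r, f (e x) = ∫ x in closedBall 0 r, f x := by
  have h := e.measurePreserving.setIntegral_preimage_emb
    e.toHomeomorph.measurableEmbedding f (closedBall 0 r)
  rwa [e.preimage_closedBall, map_zero] at h

namespace EuclideanSpace

variable {ι : Type*} [Fintype ι]

theorem integral_closedBall_coord_mul_coord_of_ne {i j : ι} (hij : i ≠ j) (r : ℝ) :
    ∫ x in closedBall (0 : EuclideanSpace ℝ ι) r, x i * x j = 0 := by
  classical
  let e : EuclideanSpace ℝ ι ≃ₗᵢ[ℝ] EuclideanSpace ℝ ι := LinearIsometryEquiv.piLpCongrRight 2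
    fun l => if l = i then LinearIsometryEquiv.neg ℝ else LinearIsometryEquiv.refl ℝ ℝ
  have hodd : ∀ x, e x i * e x j = -(x i * x j) := fun x => by
    simp [e, hij.symm]
  have h := e.setIntegral_closedBall_comp (fun x => x i * x j) r
  simp only [hodd, integral_neg] at h
  linarith

theorem integral_closedBall_coord_mul_self_eq (i j : ι) (r : ℝ) :
    ∫ x in closedBall (0 : EuclideanSpace ℝ ι) r, x i * x i =
      ∫ x in closedBall (0 : EuclideanSpace ℝ ι) r, x j * x j := by
  classical
  let e : EuclideanSpace ℝ ι ≃ₗᵢ[ℝ] EuclideanSpace ℝ ι :=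
    LinearIsometryEquiv.piLpCongrLeft 2 ℝ ℝ (Equiv.swap i j)
  have hswap : ∀ x, e x j = x i := fun x => by
    simp [e, Equiv.piCongrLeft'_apply]
  simpa only [hswap] using e.setIntegral_closedBall_comp (fun x => x j * x j) r

theorem integral_closedBall_coord_mul_self (i : ι) {r : ℝ} (hr : 0 ≤ r) :
    ∫ x in closedBall (0 : EuclideanSpace ℝ ι) r, x i * x i =
      volume.real (closedBall (0 : EuclideanSpace ℝ ι) 1) *
        (r ^ (Fintype.card ι + 2) / (Fintype.card ι + 2)) := by
  have : Nonempty ι := ⟨i⟩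
  have hcard : (Fintype.card ι : ℝ) ≠ 0 := Nat.cast_ne_zero.2 Fintype.card_ne_zero
  have hsum : ∑ j : ι, ∫ x in closedBall (0 : EuclideanSpace ℝ ι) r, x j * x j =
      ∫ x in closedBall (0 : EuclideanSpace ℝ ι) r, ‖x‖ ^ 2 := by
    rw [← integral_finsetSum _ fun j _ =>
      (by fun_prop : Continuous _).continuousOn.integrableOn_compact (isCompact_closedBall 0 r)]
    simp_rw [EuclideanSpace.norm_sq_eq, Real.norm_eq_abs, sq_abs, sq]
  rw [integral_closedBall_norm_pow volume 2 hr, finrank_euclideanSpace] at hsum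
  simp_rw [integral_closedBall_coord_mul_self_eq _ i r, Finset.sum_const, Finset.card_univ,
    nsmul_eq_mul, mul_assoc] at hsum
  exact mul_left_cancel₀ hcard hsum

variable [DecidableEq ι]

theorem integral_closedBall_coord_mul_coord (i j : ι) {r : ℝ} (hr : 0 ≤ r) :
    ∫ x in closedBall (0 : EuclideanSpace ℝ ι) r, x i * x j =
      if i = j then volume.real (closedBall (0 : EuclideanSpace ℝ ι) 1) *
        (r ^ (Fintype.card ι + 2) / (Fintype.card ι + 2)) else 0 := by
  split_ifs with hij
  · subst hij
    exact integral_closedBall_coord_mul_self i hr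
  · exact integral_closedBall_coord_mul_coord_of_ne hij r

theorem integral_closedBall_quadratic (C : Matrix ι ι ℝ) {r : ℝ} (hr : 0 ≤ r) :
    ∫ x in closedBall (0 : EuclideanSpace ℝ ι) r, ∑ i, ∑ j, C i j * x i * x j =
      C.trace * volume.real (closedBall (0 : EuclideanSpace ℝ ι) 1) *
        (r ^ (Fintype.card ι + 2) / (Fintype.card ι + 2)) := by
  have hint : ∀ i j, IntegrableOn (fun x : EuclideanSpace ℝ ι => C i j * x i * x j)
      (closedBall 0 r) := fun i j =>
    (by fun_prop : Continuous _).continuousOn.integrableOn_compact (isCompact_closedBall 0 r)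
  rw [integral_finsetSum _ fun i _ => integrable_finsetSum _ fun j _ => hint i j]
  simp_rw [integral_finsetSum _ fun j _ => hint _ j, mul_assoc, integral_const_mul,
    integral_closedBall_coord_mul_coord _ _ hr, mul_ite, mul_zero, Finset.sum_ite_eq,
    Finset.mem_univ, if_true, Matrix.trace, Matrix.diag, Finset.sum_mul]

end EuclideanSpace

theorem stmt_1_general (d : ℕ) (C : Matrix (Fin d) (Fin d) ℝ) (r : ℝ) (hr : 0 ≤ r) :
    (∫ x in Metric.closedBall (0 : EuclideanSpace ℝ (Fin d)) r,
        (1 - (1 / 6 : ℝ) * ∑ μ : Fin d, ∑ ν : Fin d, C μ ν * x μ * x ν)) =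
      (volume (Metric.closedBall (0 : EuclideanSpace ℝ (Fin d)) 1)).toReal * r ^ d *
        (1 - C.trace * r ^ 2 / (6 * ((d : ℝ) + 2))) := by
  have hquad : IntegrableOn (fun x : EuclideanSpace ℝ (Fin d) => ∑ μ, ∑ ν, C μ ν * x μ * x ν)
      (closedBall 0 r) :=
    (by fun_prop : Continuous _).continuousOn.integrableOn_compact (isCompact_closedBall 0 r)
  have h1 : IntegrableOn (fun _ => (1 : ℝ)) (closedBall (0 : EuclideanSpace ℝ (Fin d)) r) :=
    integrableOn_const measure_closedBall_lt_top.ne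
  rw [integral_sub h1 (hquad.const_mul _), integral_const_mul,
    EuclideanSpace.integral_closedBall_quadratic C hr, setIntegral_const, smul_eq_mul, mul_one,
    Measure.addHaar_real_closedBall' _ _ hr, finrank_euclideanSpace_fin, Fintype.card_fin,
    measureReal_def, pow_add]
  field_simp

/-- For `d ≥ 1`, a real `d×d` matrix `C`, and radius `r ≥ 0`, the integral of
`x ↦ 1 − (1/6)⟨x, C x⟩` over the closed Euclidean ball of radius `r` in `ℝ^d` equals
`ω_d · r^d · (1 − (trace C) · r² / (6(d+2)))`, where `ω_d` is the Lebesgue volume of the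
unit ball. -/
theorem stmt_1 (d : ℕ) (hd : 1 ≤ d) (C : Matrix (Fin d) (Fin d) ℝ) (r : ℝ) (hr : 0 ≤ r) :
    (∫ x in Metric.closedBall (0 : EuclideanSpace ℝ (Fin d)) r,
        (1 - (1 / 6 : ℝ) * ∑ μ : Fin d, ∑ ν : Fin d, C μ ν * x μ * x ν)) =
      (volume (Metric.closedBall (0 : EuclideanSpace ℝ (Fin d)) 1)).toReal * r ^ d *
        (1 - C.trace * r ^ 2 / (6 * ((d : ℝ) + 2))) :=
  stmt_1_general d C r hr
end

section
/- Let A be a real symmetric positive semidefinite n×n matrix with eigenvalues λ_1 > λ_2 ≥ … ≥ λ_n ≥ 0 (top eigenvalue simple, λ_1 > 0) and orthonormal eigenvectors v_1, …, v_n. Let x_0 be a unit vector with Γ := |⟨v_1, x_0⟩| > 0, and let y_k = A^k x_0 / ‖A^k x_0‖ be the normalized power iterate. Then for every natural number k, the Rayleigh quotient satisfies 0 ≤ λ_1 − ⟨y_k, A y_k⟩ ≤ (λ_1 − λ_n) · ((1 − Γ²)/Γ²) · (λ_2/λ_1)^{2k}. -/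
/-!
Expand `x` in the orthonormal eigenbasis, `x = ∑ cᵢ vᵢ`. Then `Aᵏ x` has coefficients `λᵢᵏ cᵢ`,
so the Rayleigh quotient of its normalization is the mean of the `λᵢ` with weights
`pᵢ = λᵢ^(2k) cᵢ²`, and `λ₁ - ⟨yₖ, A yₖ⟩ = ∑ (λ₁ - λᵢ) pᵢ / ∑ pᵢ ≥ 0`. The term `i = 1` of the
numerator vanishes, the others are at most `(λ₁ - λₙ) λ₂^(2k) cᵢ²`, and `∑_{i ≠ 1} cᵢ² = 1 - Γ²`
by Parseval; the denominator is at least `p₁ = λ₁^(2k) Γ²`.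
-/

open scoped RealInnerProductSpace

open Finset

theorem sum_pow_mul_le_pow_mul_sum {ι : Type*} {s : Finset ι} {lam w : ι → ℝ} {μ : ℝ}
    (hw : ∀ i, 0 ≤ w i) (hlam₀ : ∀ i ∈ s, 0 ≤ lam i) (hlam : ∀ i ∈ s, lam i ≤ μ) (j : ℕ) :
    ∑ i ∈ s, lam i ^ j * w i ≤ μ ^ j * ∑ i ∈ s, w i := by
  rw [mul_sum]
  exact sum_le_sum fun i hi =>
    mul_le_mul_of_nonneg_right (pow_le_pow_left₀ (hlam₀ i hi) (hlam i hi) j) (hw i)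

theorem sub_sum_mul_div_sum_eq {ι : Type*} [Fintype ι] {p : ι → ℝ} (hp : ∑ i, p i ≠ 0)
    (lam : ι → ℝ) (a : ℝ) :
    a - (∑ i, lam i * p i) / ∑ i, p i = (∑ i, (a - lam i) * p i) / ∑ i, p i := by
  rw [eq_div_iff hp, sub_mul, div_mul_cancel₀ _ hp, mul_sum, ← sum_sub_distrib]
  exact sum_congr rfl fun i _ => by ring

variable {ι : Type*} [Fintype ι] {p lam : ι → ℝ} {i₀ : ι}

theorem sub_sum_mul_div_sum_nonneg (hp : ∀ i, 0 ≤ p i) (hsum : 0 < ∑ i, p i)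
    (hmax : ∀ i, lam i ≤ lam i₀) :
    0 ≤ lam i₀ - (∑ i, lam i * p i) / ∑ i, p i := by
  rw [sub_sum_mul_div_sum_eq hsum.ne']
  exact div_nonneg (sum_nonneg fun i _ => mul_nonneg (sub_nonneg.2 (hmax i)) (hp i)) hsum.le

theorem sub_sum_mul_div_sum_le [DecidableEq ι] {m : ℝ} (hp : ∀ i, 0 ≤ p i) (hp₀ : 0 < p i₀)
    (hmin : ∀ i, m ≤ lam i) :
    lam i₀ - (∑ i, lam i * p i) / ∑ i, p i ≤
      (lam i₀ - m) * (∑ i ∈ univ.erase i₀, p i) / p i₀ := by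
  have hsum : p i₀ ≤ ∑ i, p i := single_le_sum (fun i _ => hp i) (mem_univ i₀)
  have hnum : ∑ i, (lam i₀ - lam i) * p i ≤ (lam i₀ - m) * ∑ i ∈ univ.erase i₀, p i := by
    rw [← sum_erase univ (a := i₀) (by rw [sub_self, zero_mul]), mul_sum]
    exact sum_le_sum fun i _ => mul_le_mul_of_nonneg_right (sub_le_sub_left (hmin i) _) (hp i)
  rw [sub_sum_mul_div_sum_eq (hp₀.trans_le hsum).ne']
  exact div_le_div₀ (mul_nonneg (sub_nonneg.2 (hmin i₀)) (sum_nonneg fun i _ => hp i))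
    hnum hp₀ hsum

namespace OrthonormalBasis

variable {E : Type*} [NormedAddCommGroup E] [InnerProductSpace ℝ E]
  (b : OrthonormalBasis ι ℝ E) {T : E →ₗ[ℝ] E}

theorem inner_apply_of_apply_eq_smul (hT : ∀ i, T (b i) = lam i • b i) (i : ι) (x : E) :
    ⟪b i, T x⟫ = lam i * ⟪b i, x⟫ := by
  classical
  conv_lhs => rw [← b.sum_repr' x]
  simp [hT, inner_sum, inner_smul_right, b.inner_eq_ite, mul_comm]

theorem inner_pow_apply_of_apply_eq_smul (hT : ∀ i, T (b i) = lam i • b i) (i : ι) (m : ℕ) (x : E) :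
    ⟪b i, (T ^ m) x⟫ = lam i ^ m * ⟪b i, x⟫ := by
  induction m with
  | zero => simp
  | succ m ih =>
    rw [pow_succ', Module.End.mul_apply, b.inner_apply_of_apply_eq_smul hT, ih, pow_succ']
    ring

theorem inner_apply_self_of_apply_eq_smul (hT : ∀ i, T (b i) = lam i • b i) (x : E) :
    ⟪x, T x⟫ = ∑ i, lam i * ⟪b i, x⟫ ^ 2 := by
  rw [← b.sum_inner_mul_inner]
  refine sum_congr rfl fun i _ => ?_
  rw [b.inner_apply_of_apply_eq_smul hT, real_inner_comm]
  ring

theorem inner_normalize_apply_of_apply_eq_smul (hT : ∀ i, T (b i) = lam i • b i) (y : E) :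
    ⟪‖y‖⁻¹ • y, T (‖y‖⁻¹ • y)⟫ = (∑ i, lam i * ⟪b i, y⟫ ^ 2) / ∑ i, ⟪b i, y⟫ ^ 2 := by
  rw [map_smul, real_inner_smul_left, real_inner_smul_right,
    b.inner_apply_self_of_apply_eq_smul hT, b.sum_sq_inner_right]
  field_simp

theorem rayleigh_power_iterate_error_mem_Icc [DecidableEq ι] (hT : ∀ i, T (b i) = lam i • b i)
    {μ m : ℝ} (hmax : ∀ i, lam i ≤ lam i₀) (hsecond : ∀ i ≠ i₀, lam i ≤ μ) (hmin : ∀ i, m ≤ lam i)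
    (hnonneg : ∀ i, 0 ≤ lam i) (hpos : 0 < lam i₀) {x : E} (hx : ‖x‖ = 1)
    (hc : ⟪b i₀, x⟫ ≠ 0) (k : ℕ) :
    let y := ‖(T ^ k) x‖⁻¹ • (T ^ k) x
    lam i₀ - ⟪y, T y⟫ ∈ Set.Icc 0
      ((lam i₀ - m) * ((1 - ⟪b i₀, x⟫ ^ 2) / ⟪b i₀, x⟫ ^ 2) * (μ / lam i₀) ^ (2 * k)) := by
  intro y
  set c := fun i => ⟪b i, x⟫
  have hcoef : ∀ i, ⟪b i, (T ^ k) x⟫ ^ 2 = lam i ^ (2 * k) * c i ^ 2 := fun i => by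
    rw [b.inner_pow_apply_of_apply_eq_smul hT]
    ring
  have hp : ∀ i, 0 ≤ lam i ^ (2 * k) * c i ^ 2 := fun i =>
    mul_nonneg (pow_nonneg (hnonneg i) _) (sq_nonneg _)
  have hp₀ : 0 < lam i₀ ^ (2 * k) * c i₀ ^ 2 :=
    mul_pos (pow_pos hpos _) (sq_pos_of_ne_zero hc)
  have hrest :
      ∑ i ∈ univ.erase i₀, lam i ^ (2 * k) * c i ^ 2 ≤ μ ^ (2 * k) * (1 - c i₀ ^ 2) := by
    have hparseval : ∑ i, c i ^ 2 = 1 := by rw [b.sum_sq_inner_right, hx, one_pow]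
    rw [← hparseval, ← sum_erase_eq_sub (mem_univ i₀)]
    exact sum_pow_mul_le_pow_mul_sum (fun i => sq_nonneg _)
      (fun i _ => hnonneg i) (fun i hi => hsecond i (ne_of_mem_erase hi)) _
  simp only [y, b.inner_normalize_apply_of_apply_eq_smul hT, hcoef]
  refine ⟨sub_sum_mul_div_sum_nonneg hp (hp₀.trans_le ?_) hmax,
    (sub_sum_mul_div_sum_le hp hp₀ hmin).trans ?_⟩
  · exact single_le_sum (fun i _ => hp i) (mem_univ i₀)
  calc (lam i₀ - m) * (∑ i ∈ univ.erase i₀, lam i ^ (2 * k) * c i ^ 2) /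
        (lam i₀ ^ (2 * k) * c i₀ ^ 2)
      ≤ (lam i₀ - m) * (μ ^ (2 * k) * (1 - c i₀ ^ 2)) / (lam i₀ ^ (2 * k) * c i₀ ^ 2) := by
        gcongr
        exact sub_nonneg.2 (hmin i₀)
    _ = (lam i₀ - m) * ((1 - c i₀ ^ 2) / c i₀ ^ 2) * (μ / lam i₀) ^ (2 * k) := by
        rw [div_pow]
        field_simp

end OrthonormalBasis

/-- Rayleigh-quotient error of the power method: with the notation of the power iteration
(`A` symmetric PSD, eigenvalues `λ_1 > λ_2 ≥ … ≥ λ_n ≥ 0`, orthonormal eigenvectors `v_k`,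
unit vector `x_0` with `Γ = |⟨v_1, x_0⟩| > 0`, normalized iterate `y_k`), one has
`0 ≤ λ_1 − ⟨y_k, A y_k⟩ ≤ (λ_1 − λ_n)((1 − Γ²)/Γ²)(λ_2/λ_1)^(2k)`. -/
theorem stmt_14 (n : ℕ) (hn : 2 ≤ n) (A : Matrix (Fin n) (Fin n) ℝ)
    (lam : Fin n → ℝ) (v : Fin n → EuclideanSpace ℝ (Fin n))
    (horth : Orthonormal ℝ v)
    (heig : ∀ k, A.mulVec (WithLp.equiv 2 (Fin n → ℝ) (v k)) =
      lam k • WithLp.equiv 2 (Fin n → ℝ) (v k))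
    (hdesc : ∀ k l : Fin n, k ≤ l → lam l ≤ lam k)
    (hnonneg : ∀ k, 0 ≤ lam k)
    (hpos : 0 < lam ⟨0, by omega⟩)
    (x0 : EuclideanSpace ℝ (Fin n)) (hx0 : ‖x0‖ = 1)
    (Γ : ℝ) (hΓdef : Γ = |⟪v ⟨0, by omega⟩, x0⟫|) (hΓ : 0 < Γ)
    (k : ℕ) (xk yk : EuclideanSpace ℝ (Fin n))
    (hxk : xk = (WithLp.equiv 2 (Fin n → ℝ)).symm
      ((A ^ k).mulVec (WithLp.equiv 2 (Fin n → ℝ) x0)))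
    (hyk : yk = ‖xk‖⁻¹ • xk) :
    0 ≤ lam ⟨0, by omega⟩ -
        ⟪yk, (WithLp.equiv 2 (Fin n → ℝ)).symm (A.mulVec (WithLp.equiv 2 (Fin n → ℝ) yk))⟫ ∧
      lam ⟨0, by omega⟩ -
          ⟪yk, (WithLp.equiv 2 (Fin n → ℝ)).symm (A.mulVec (WithLp.equiv 2 (Fin n → ℝ) yk))⟫ ≤
        (lam ⟨0, by omega⟩ - lam ⟨n - 1, by omega⟩) * ((1 - Γ ^ 2) / Γ ^ 2) *
          (lam ⟨1, by omega⟩ / lam ⟨0, by omega⟩) ^ (2 * k) := by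
  set T := Matrix.toEuclideanLin A
  let b := OrthonormalBasis.mk horth
    (horth.linearIndependent.span_eq_top_of_card_eq_finrank' (by simp)).ge
  have hT : ∀ i, T (b i) = lam i • b i := fun i => by
    simp only [b, OrthonormalBasis.coe_mk]
    exact congrArg (WithLp.toLp 2) (heig i)
  have hxT : xk = (T ^ k) x0 := by rw [hxk, ← Matrix.toLpLin_pow]; rfl
  have hΓb : Γ = |⟪b ⟨0, by omega⟩, x0⟫| := by simpa [b] using hΓdef
  have hmax : ∀ i, lam i ≤ lam ⟨0, by omega⟩ := fun i => hdesc _ i (Nat.zero_le _)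
  have hsecond : ∀ i ≠ ⟨0, by omega⟩, lam i ≤ lam ⟨1, by omega⟩ := fun i hi =>
    hdesc _ i (Nat.one_le_iff_ne_zero.2 fun h => hi (Fin.ext h))
  have hmin : ∀ i, lam ⟨n - 1, by omega⟩ ≤ lam i := fun i =>
    hdesc i _ (by change i.val ≤ n - 1; omega)
  have h := b.rayleigh_power_iterate_error_mem_Icc hT hmax hsecond hmin hnonneg hpos hx0
    (abs_pos.1 (hΓb ▸ hΓ)) k
  rw [hΓb, sq_abs, hyk, hxT]
  exact h
end

section
/- Let U_1 be a unitary on ℂ^a ⊗ ℂ^n that is an exact block encoding of the n×n matrix A_1, and let U_2 be a unitary on ℂ^b ⊗ ℂ^n that is an exact block encoding of the n×n matrix A_2. On ℂ^a ⊗ ℂ^b ⊗ ℂ^n, let Ũ_1 be the unitary acting as U_1 on the first and third tensor factors and as the identity on the second (entries (Ũ_1)_{(α,β,m),(α',β',m')} = δ_{β β'} (U_1)_{(α,m),(α',m')}), and let Ũ_2 act as U_2 on the second and third factors and as the identity on the first. Then the product Ũ_1 Ũ_2 is a unitary on ℂ^a ⊗ ℂ^b ⊗ ℂ^n that is an exact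 block encoding of the product A_1 A_2, i.e., (⟨0| ⊗ ⟨0| ⊗ I_n) Ũ_1 Ũ_2 (|0⟩ ⊗ |0⟩ ⊗ I_n) = A_1 A_2. -/
private lemma aux_mem₁ {a b n : ℕ}
    (U : Matrix (Fin a × Fin n) (Fin a × Fin n) ℂ)
    (hU : U ∈ Matrix.unitaryGroup (Fin a × Fin n) ℂ)
    (V : Matrix (Fin a × Fin b × Fin n) (Fin a × Fin b × Fin n) ℂ)
    (hV : ∀ α β p α' β' p', V (α, β, p) (α', β', p') =
      if β = β' then U (α, p) (α', p') else 0) :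
    V ∈ Matrix.unitaryGroup (Fin a × Fin b × Fin n) ℂ := by
  rw [Matrix.mem_unitaryGroup_iff] at hU ⊢
  ext ⟨α, β, p⟩ ⟨α', β', p'⟩
  have hU' := congrFun (congrFun hU (α, p)) (α', p')
  simp only [Matrix.mul_apply, Matrix.star_apply, Fintype.sum_prod_type, hV,
    Matrix.one_apply, Prod.mk.injEq] at hU' ⊢
  rw [Finset.sum_comm]
  simp only [apply_ite (star : ℂ → ℂ), star_zero, mul_ite, mul_zero,
    Finset.sum_ite_irrel, Finset.sum_const_zero]
  rw [Finset.sum_ite_eq Finset.univ β']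
  simp only [Finset.mem_univ, if_true]
  by_cases hβ : β = β'
  · subst hβ
    simpa [hU'] using hU'
  · simp [hβ, Ne.symm hβ]

private lemma aux_mem₂ {a b n : ℕ}
    (U : Matrix (Fin b × Fin n) (Fin b × Fin n) ℂ)
    (hU : U ∈ Matrix.unitaryGroup (Fin b × Fin n) ℂ)
    (V : Matrix (Fin a × Fin b × Fin n) (Fin a × Fin b × Fin n) ℂ)
    (hV : ∀ α β p α' β' p', V (α, β, p) (α', β', p') =
      if α = α' then U (β, p) (β', p') else 0) :
    V ∈ Matrix.unitaryGroup (Fin a × Fin b × Fin n) ℂ := by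
  rw [Matrix.mem_unitaryGroup_iff] at hU ⊢
  ext ⟨α, β, p⟩ ⟨α', β', p'⟩
  have hU' := congrFun (congrFun hU (β, p)) (β', p')
  simp only [Matrix.mul_apply, Matrix.star_apply, Fintype.sum_prod_type, hV,
    Matrix.one_apply, Prod.mk.injEq] at hU' ⊢
  simp only [apply_ite (star : ℂ → ℂ), star_zero, mul_ite, mul_zero,
    Finset.sum_ite_irrel, Finset.sum_const_zero]
  rw [Finset.sum_ite_eq Finset.univ α']
  simp only [Finset.mem_univ, if_true]
  by_cases hα : α = α'
  · subst hα
    simpa [hU'] using hU'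
  · simp [hα, Ne.symm hα]

/-- Product of block encodings: if `U₁` (on `ℂ^a ⊗ ℂ^n`) block-encodes `A₁` and `U₂`
(on `ℂ^b ⊗ ℂ^n`) block-encodes `A₂`, then the product of their extensions `V₁`, `V₂` to
`ℂ^a ⊗ ℂ^b ⊗ ℂ^n` (acting as the identity on the other ancilla register) is a unitary
block encoding of `A₁ A₂`. -/
theorem stmt_16 (a b n : ℕ) (ha : 0 < a) (hb : 0 < b)
    (U₁ : Matrix (Fin a × Fin n) (Fin a × Fin n) ℂ)
    (U₂ : Matrix (Fin b × Fin n) (Fin b × Fin n) ℂ)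
    (hU₁ : U₁ ∈ Matrix.unitaryGroup (Fin a × Fin n) ℂ)
    (hU₂ : U₂ ∈ Matrix.unitaryGroup (Fin b × Fin n) ℂ)
    (A₁ A₂ : Matrix (Fin n) (Fin n) ℂ)
    (hA₁ : ∀ p q : Fin n, U₁ (⟨0, ha⟩, p) (⟨0, ha⟩, q) = A₁ p q)
    (hA₂ : ∀ p q : Fin n, U₂ (⟨0, hb⟩, p) (⟨0, hb⟩, q) = A₂ p q)
    (V₁ V₂ : Matrix (Fin a × Fin b × Fin n) (Fin a × Fin b × Fin n) ℂ)
    (hV₁ : ∀ α β p α' β' p', V₁ (α, β, p) (α', β', p') =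
      if β = β' then U₁ (α, p) (α', p') else 0)
    (hV₂ : ∀ α β p α' β' p', V₂ (α, β, p) (α', β', p') =
      if α = α' then U₂ (β, p) (β', p') else 0) :
    V₁ * V₂ ∈ Matrix.unitaryGroup (Fin a × Fin b × Fin n) ℂ ∧
      ∀ p q : Fin n,
        (V₁ * V₂) (⟨0, ha⟩, ⟨0, hb⟩, p) (⟨0, ha⟩, ⟨0, hb⟩, q) = (A₁ * A₂) p q := by
  refine ⟨mul_mem (aux_mem₁ U₁ hU₁ V₁ hV₁) (aux_mem₂ U₂ hU₂ V₂ hV₂), fun p q => ?_⟩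
  simp only [Matrix.mul_apply, Fintype.sum_prod_type, hV₁, hV₂]
  simp only [ite_mul, mul_ite, zero_mul, mul_zero,
    Finset.sum_ite_irrel, Finset.sum_const_zero]
  rw [Finset.sum_ite_eq' Finset.univ (⟨0, ha⟩ : Fin a)]
  simp only [Finset.mem_univ, if_true]
  rw [Finset.sum_ite_eq Finset.univ (⟨0, hb⟩ : Fin b)]
  simp [hA₁, hA₂]
end
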